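/- Let S be a finite subset of ℕ with |S| = n and let C = (n_1,…,n_k) and C' = (m_1,…,m_l) be compositions of n. Then 1_C(S) ∘ 1_{C'}(S) = Σ 1_{C(a)}(S), summed over all k×l matrices a = (a_i^j) of nonnegative integers with row sums Σ_j a_i^j = n_i for all i and column sums Σ_i a_i^j = m_j for all j, where C(a) is the composition of n obtained by reading the entries a_1^1,…,a_1^l, a_2^1,…,a_2^l, …, a_k^1,…,a_k^l row by row and deleting all zero entries (Solomon's multiplication rule). -/

import Mathlib

/-!
Twisted descent algebras and the Solomon-Tits algebra (Patras-Schocker).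

* A *packed sequence* is a finite sequence of pairwise disjoint nonempty
  finite subsets of ℕ.
* `TD k` is the free twisted descent algebra `𝒯`: the free `k`-module with
  basis `1_w`, `w` a packed sequence.
* `convL` is the convolution product `∗`, `compL` the composition product `∘`,
  `deltaL` the coproduct `δ`.
* `TD k` also realizes the free twisted bialgebra `ℬ` (whose basis words
  `α_{S_1}⋯α_{S_k}` are exactly the packed sequences); `Tmap u` realizes the
  convolution `1_{U_1} ∗ ⋯ ∗ 1_{U_l}` of characteristic maps as an
  endomorphism of `ℬ`; `BS k S` is the graded piece `ℬ_S` with concatenation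
  `mulInto` and deconcatenation `deltaInto`.
-/

open scoped TensorProduct

noncomputable section
namespace TwistedDescent

/-- A sequence of finite subsets of `ℕ`. -/
abbrev PSeq : Type := List (Finset ℕ)

/-- A packed sequence: a finite sequence of pairwise disjoint nonempty finite
subsets of `ℕ`. -/
def Packed (w : PSeq) : Prop :=
  w.Pairwise (fun S T => Disjoint S T) ∧ ∀ S ∈ w, S ≠ ∅

instance : DecidablePred Packed := fun w => by unfold Packed; infer_instance

/-- The type of packed sequences. -/
abbrev PackedSeq : Type := {w : PSeq // Packed w}

/-- The free twisted descent algebra `𝒯`: the free `k`-module with basis the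
packed sequences.  (The same module realizes the free twisted bialgebra `ℬ`,
whose basis words are the packed sequences.) -/
abbrev TD (k : Type) [CommRing k] : Type := PackedSeq →₀ k

variable (k : Type) [CommRing k]

/-- The basis element `1_l` of `𝒯` if `l` is packed, and `0` otherwise. -/
def mk (l : PSeq) : TD k := if h : Packed l then Finsupp.single ⟨l, h⟩ 1 else 0

/-- The union `S_1 ∪ ⋯ ∪ S_k` of the members of a sequence of sets. -/
def unionOf (w : PSeq) : Finset ℕ := w.foldr (· ∪ ·) ∅

/-- The convolution product `∗` on `𝒯`, as a bilinear map:
`1_{(S_1,…,S_n)} ∗ 1_{(T_1,…,T_m)} = 1_{(S_1,…,S_n,T_1,…,T_m)}` if all the sets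
are pairwise disjoint, and `0` otherwise. -/
def convL : TD k →ₗ[k] TD k →ₗ[k] TD k :=
  Finsupp.lsum k fun w => LinearMap.toSpanSingleton k _ <|
    Finsupp.lsum k fun v => LinearMap.toSpanSingleton k _ (mk k (w.1 ++ v.1))

/-- The refinement `(S_1∩T_1,…,S_1∩T_k,…,S_n∩T_1,…,S_n∩T_k)` of two sequences,
with all empty intersections deleted. -/
def refines (w v : PSeq) : PSeq :=
  w.flatMap fun S => (v.map fun U => S ∩ U).filter fun U => U ≠ ∅

/-- The composition product on basis elements: `0` if the underlying sets
differ, and the refinement otherwise. -/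
def compB (w v : PSeq) : TD k :=
  if unionOf w = unionOf v then mk k (refines w v) else 0

/-- The composition product `∘` on `𝒯`, as a bilinear map. -/
def compL : TD k →ₗ[k] TD k →ₗ[k] TD k :=
  Finsupp.lsum k fun w => LinearMap.toSpanSingleton k _ <|
    Finsupp.lsum k fun v => LinearMap.toSpanSingleton k _ (compB k w.1 v.1)

instance : Zero (TD k ⊗[k] TD k) :=
  (inferInstance : AddZeroClass (TD k ⊗[k] TD k)).toZero

/-- All ways of splitting each block `S_i` of `w` into an ordered pair
`(T_i, U_i)` with `S_i = T_i ⊔ U_i`. -/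
def splittings (w : PSeq) : List (List (Finset ℕ × Finset ℕ)) :=
  (w.map fun S => S.powerset.toList.map fun U => (U, S \ U)).sections

/-- Delete all empty sets from a sequence. -/
def strip (l : PSeq) : PSeq := l.filter fun S => S ≠ ∅

/-- The coproduct on a basis element:
`δ(1_{(S_1,…,S_k)}) = Σ 1_{(T_1,…,T_k)^} ⊗ 1_{(U_1,…,U_k)^}` summed over all
ways of writing `S_i = T_i ⊔ U_i`, where `^` deletes empty sets. -/
def deltaB (w : PackedSeq) : TD k ⊗[k] TD k :=
  ((splittings w.1).map fun p =>
    (mk k (strip (p.map Prod.fst)) ⊗ₜ[k] mk k (strip (p.map Prod.snd)) :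
      TD k ⊗[k] TD k)).sum

/-- The coproduct `δ : 𝒯 → 𝒯 ⊗ 𝒯`. -/
def deltaL : TD k →ₗ[k] TD k ⊗[k] TD k :=
  Finsupp.lsum k fun w => LinearMap.toSpanSingleton k _ (deltaB k w)

/-- The componentwise convolution `∗₂` on `𝒯 ⊗ 𝒯`:
`(a⊗b) ∗₂ (c⊗d) = (a∗c)⊗(b∗d)`. -/
def conv2 : TD k ⊗[k] TD k →ₗ[k] TD k ⊗[k] TD k →ₗ[k] TD k ⊗[k] TD k :=
  (TensorProduct.homTensorHomMap (RingHom.id k) _ _ _ _).comp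
    (TensorProduct.map (convL k) (convL k))

/-- The componentwise composition `∘₂` on `𝒯 ⊗ 𝒯`:
`(a⊗b) ∘₂ (c⊗d) = (a∘c)⊗(b∘d)`. -/
def comp2 : TD k ⊗[k] TD k →ₗ[k] TD k ⊗[k] TD k →ₗ[k] TD k ⊗[k] TD k :=
  (TensorProduct.homTensorHomMap (RingHom.id k) _ _ _ _).comp
    (TensorProduct.map (compL k) (compL k))

/-- The linear map `μ : 𝒯 ⊗ 𝒯 → 𝒯` induced by the convolution product. -/
def muL : TD k ⊗[k] TD k →ₗ[k] TD k := TensorProduct.lift (convL k)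

/-- The submodule `𝒯_S` of `𝒯` spanned by the basis elements `1_w` with `w` an
ordered partition of `S`. -/
def TS (S : Finset ℕ) : Submodule k (TD k) :=
  Submodule.span k {x | ∃ w : PackedSeq, unionOf w.1 = S ∧ x = Finsupp.single w 1}

/-- The blocks of `w` contained in `U_1`, in their original relative order,
then those contained in `U_2`, and so on. -/
def reorder (u w : PSeq) : PSeq := u.flatMap fun U => w.filter fun S => S ⊆ U

/-- Action of `T_u = 1_{U_1} ∗ ⋯ ∗ 1_{U_l}` on a basis word of `ℬ`: the word is
killed unless it has degree `∪ U_j` and each of its blocks is contained in some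
`U_j`, in which case the blocks are regrouped along `u`. -/
def TmapB (u : PSeq) (w : PackedSeq) : TD k :=
  if unionOf w.1 = unionOf u ∧ ∀ S ∈ w.1, ∃ U ∈ u, S ⊆ U then mk k (reorder u w.1)
  else 0

/-- The endomorphism `T_u = 1_{U_1} ∗ ⋯ ∗ 1_{U_l}` of the free twisted
bialgebra `ℬ`. -/
def Tmap (u : PSeq) : Module.End k (TD k) :=
  Finsupp.lsum k fun w => LinearMap.toSpanSingleton k _ (TmapB k u w)

/-- Ordered partitions of the finite set `S`. -/
def OrdPart (S : Finset ℕ) : Type := {w : PSeq // Packed w ∧ unionOf w = S}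

/-- The graded component `ℬ_S`: the free `k`-module on the ordered partitions
of `S`. -/
abbrev BS (S : Finset ℕ) : Type := OrdPart S →₀ k

/-- Basis element of `ℬ_S`, or `0` if `l` is not an ordered partition of `S`. -/
def mkS (S : Finset ℕ) (l : PSeq) : BS k S :=
  if h : Packed l ∧ unionOf l = S then Finsupp.single ⟨l, h⟩ 1 else 0

instance (S S' : Finset ℕ) : Zero (BS k S ⊗[k] BS k S') :=
  (inferInstance : AddZeroClass (BS k S ⊗[k] BS k S')).toZero

/-- Concatenation `m_{U,V} : ℬ_U ⊗ ℬ_V → ℬ_S` (nonzero only when `U ⊔ V = S`),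
as a bilinear map. -/
def mulInto (U V S : Finset ℕ) : BS k U →ₗ[k] BS k V →ₗ[k] BS k S :=
  Finsupp.lsum k fun w => LinearMap.toSpanSingleton k _ <|
    Finsupp.lsum k fun v => LinearMap.toSpanSingleton k _ (mkS k S (w.1 ++ v.1))

/-- Deconcatenation `δ_{U,V} : ℬ_S → ℬ_U ⊗ ℬ_V` (intended for `S = U ⊔ V`):
a basis word goes to `w_U ⊗ w_V` if each of its blocks is contained in `U` or
in `V`, where `w_U` (resp. `w_V`) is the subsequence of blocks contained in `U`
(resp. `V`), and to `0` otherwise. -/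
def deltaInto (S U V : Finset ℕ) : BS k S →ₗ[k] BS k U ⊗[k] BS k V :=
  Finsupp.lsum k fun w => LinearMap.toSpanSingleton k _ <|
    if ∀ B ∈ w.1, B ⊆ U ∨ B ⊆ V then
      mkS k U (w.1.filter fun B => B ⊆ U) ⊗ₜ[k] mkS k V (w.1.filter fun B => B ⊆ V)
    else 0

/-- Graded endomorphisms of `ℬ`: families `(f_S)_S` of endomorphisms of the
graded components `ℬ_S`. -/
abbrev GEnd : Type := (S : Finset ℕ) → Module.End k (BS k S)

/-- The convolution of graded endomorphisms:
`(f∗g)_S = Σ_{U ⊔ V = S} m_{U,V} ∘ (f_U ⊗ g_V) ∘ δ_{U,V}`. -/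
def gconv (f g : GEnd k) : GEnd k := fun S =>
  ∑ U ∈ S.powerset,
    (TensorProduct.lift (mulInto k U (S \ U) S)).comp
      ((TensorProduct.map (f U) (g (S \ U))).comp (deltaInto k S U (S \ U)))

/-- The characteristic map `1_∅`: the identity on `ℬ_∅` and `0` on `ℬ_S` for
`S ≠ ∅`. -/
def gone : GEnd k := fun S => if S = ∅ then LinearMap.id else 0

/-- `1_C(S)`: the sum of all `1_w`, `w` an ordered partition of `S` of
type `C`. -/
def oneC (C : List ℕ) (S : Finset ℕ) : TD k :=
  ∑ᶠ w : PackedSeq,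
    if unionOf w.1 = S ∧ w.1.map Finset.card = C then Finsupp.single w (1 : k) else 0

/-- The composition obtained by reading a matrix of nonnegative integers row by
row and deleting all zero entries. -/
def matComp {r c : ℕ} (a : Fin r → Fin c → ℕ) : List ℕ :=
  (List.finRange r).flatMap fun i =>
    ((List.finRange c).map fun j => a i j).filter fun m => m ≠ 0

/-- `σ` is a permutation of `[n] = {1,…,n}`: it fixes everything outside
`{1,…,n}` (and hence permutes `{1,…,n}`). -/
def IsPermOn (n : ℕ) (σ : Equiv.Perm ℕ) : Prop := ∀ m ∉ Finset.Icc 1 n, σ m = m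

/-- The sequence `({σ(1)},…,{σ(n)})` of singletons, written `1_σ` in `𝒯`. -/
def permList (n : ℕ) (σ : Equiv.Perm ℕ) : PSeq :=
  (List.range n).map fun i => {σ (i + 1)}

/-- An ordered partition `(S_1,…,S_k)` is increasing if `s < s'` whenever
`s ∈ S_i`, `s' ∈ S_j` and `i < j`. -/
def Increasing (w : PSeq) : Prop := w.Pairwise fun S T => ∀ s ∈ S, ∀ t ∈ T, s < t

/-- `σ` is a shuffle of `(S_1,…,S_k)`: the elements of each `S_i` occur in
increasing order in the sequence `(σ(1),…,σ(n))`. -/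
def IsShuffle (n : ℕ) (w : PSeq) (σ : Equiv.Perm ℕ) : Prop :=
  ∀ S ∈ w, ∀ i j : ℕ, 1 ≤ i → i < j → j ≤ n → σ i ∈ S → σ j ∈ S → σ i < σ j

/-- The descent set `D(τ) = {i | 1 ≤ i ≤ n-1, τ(i) > τ(i+1)}` of a permutation
of `[n]`. -/
def Des (n : ℕ) (τ : Equiv.Perm ℕ) : Set ℕ := {i | 1 ≤ i ∧ i < n ∧ τ (i + 1) < τ i}

/-- The right action of a permutation `σ`:
`1_{(S_1,…,S_k)}·σ = 1_{(σ⁻¹(S_1),…,σ⁻¹(S_k))}`, extended linearly. -/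
def actL (σ : Equiv.Perm ℕ) : TD k →ₗ[k] TD k :=
  Finsupp.lsum k fun w =>
    LinearMap.toSpanSingleton k _ (mk k (w.1.map fun S => S.image ⇑σ⁻¹))


/-! ### Auxiliary combinatorial lemmas -/

section Aux

/-- Pointwise union of two sequences, padding with the longer one. -/
def zipu : PSeq → PSeq → PSeq
  | [], v => v
  | w, [] => w
  | a :: w, b :: v => (a ∪ b) :: zipu w v

/-- Reinsert empty sets into a sequence according to the zero entries of a
row. -/
def place : List ℕ → PSeq → PSeq
  | [], _ => []
  | 0 :: r, c => ∅ :: place r c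
  | (_+1) :: r, [] => ∅ :: place r ([] : PSeq)
  | (_+1) :: r, B :: c => B :: place r c

/-- Regroup the blocks of `u` along the rows of `R`, taking unions. -/
def chunks : List (List ℕ) → PSeq → PSeq
  | [], _ => []
  | r :: R, u => unionOf (u.take (r.filter (· ≠ 0)).length) ::
      chunks R (u.drop (r.filter (· ≠ 0)).length)

/-- Regroup the blocks of `u` along the columns of `R`, taking unions. -/
def cols : List (List ℕ) → PSeq → PSeq
  | [], _ => []
  | r :: R, u => zipu (place r (u.take (r.filter (· ≠ 0)).length))
      (cols R (u.drop (r.filter (· ≠ 0)).length))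

/-- The matrix of intersection cardinalities, as a list of rows. -/
def matRows (w v : PSeq) : List (List ℕ) :=
  w.map fun Si => v.map fun Tj => (Si ∩ Tj).card

@[simp] lemma unionOf_nil : unionOf [] = ∅ := rfl

@[simp] lemma unionOf_cons (a : Finset ℕ) (w : PSeq) :
    unionOf (a :: w) = a ∪ unionOf w := rfl

@[simp] lemma unionOf_append (x y : PSeq) :
    unionOf (x ++ y) = unionOf x ∪ unionOf y := by
  induction x with
  | nil => simp
  | cons a x ih => simp [ih, Finset.union_assoc]

lemma subset_unionOf {T : Finset ℕ} {w : PSeq} (h : T ∈ w) : T ⊆ unionOf w := by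
  induction w with
  | nil => simp at h
  | cons a w ih =>
    rcases List.mem_cons.1 h with rfl | h
    · exact Finset.subset_union_left
    · exact (ih h).trans Finset.subset_union_right

lemma disjoint_unionOf_right {a : Finset ℕ} {w : PSeq}
    (h : ∀ x ∈ w, Disjoint a x) : Disjoint a (unionOf w) := by
  induction w with
  | nil => simp
  | cons b w ih =>
    simp only [unionOf_cons, Finset.disjoint_union_right]
    exact ⟨h b (by simp), ih fun x hx => h x (by simp [hx])⟩

@[simp] lemma unionOf_filter_ne (w : PSeq) :
    unionOf (w.filter (· ≠ ∅)) = unionOf w := by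
  induction w with
  | nil => rfl
  | cons a w ih =>
    by_cases ha : a = ∅
    · simp only [ne_eq, decide_not] at ih ⊢; simp [ha, List.filter_cons, ih]
    · simp only [ne_eq, decide_not] at ih ⊢; simp [List.filter_cons, ha, ih]

lemma unionOf_map_inter (A : Finset ℕ) (v : PSeq) :
    unionOf (v.map fun T => A ∩ T) = A ∩ unionOf v := by
  induction v with
  | nil => simp
  | cons b v ih => simp [ih, Finset.inter_union_distrib_left]

lemma sum_map_inter_card {v : PSeq} (hv : v.Pairwise (fun S T => Disjoint S T))
    (A : Finset ℕ) :
    (v.map fun T => (A ∩ T).card).sum = (A ∩ unionOf v).card := by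
  induction v with
  | nil => simp
  | cons b v ih =>
    simp only [List.map_cons, List.sum_cons, unionOf_cons,
      Finset.inter_union_distrib_left]
    rw [Finset.card_union_of_disjoint, ih hv.of_cons]
    exact Finset.disjoint_of_subset_left Finset.inter_subset_right
      (Finset.disjoint_of_subset_right Finset.inter_subset_right
        (disjoint_unionOf_right (fun x hx => (List.pairwise_cons.1 hv).1 x hx)))

end Aux
section Aux2

@[simp] lemma filter_cons_zero (r : List ℕ) :
    (0 :: r).filter (· ≠ 0) = r.filter (· ≠ 0) := by simp

@[simp] lemma filter_cons_succ (m : ℕ) (r : List ℕ) :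
    ((m+1) :: r).filter (· ≠ 0) = (m+1) :: r.filter (· ≠ 0) := by simp

@[simp] lemma filter_cons_empty (w : PSeq) :
    (∅ :: w).filter (· ≠ ∅) = w.filter (· ≠ ∅) := by simp

lemma filter_cons_nonempty {B : Finset ℕ} (hB : B ≠ ∅) (w : PSeq) :
    (B :: w).filter (· ≠ ∅) = B :: w.filter (· ≠ ∅) := by simp [hB]

@[simp] lemma place_length (r : List ℕ) : ∀ c : PSeq, (place r c).length = r.length := by
  induction r with
  | nil => intro c; rfl
  | cons m r ih =>
    intro c
    match m, c with
    | 0, c => simp [place, ih]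
    | m+1, [] => simp [place, ih]
    | m+1, B :: c => simp [place, ih]

lemma place_mem {r : List ℕ} : ∀ {c : PSeq} {x : Finset ℕ}, x ∈ place r c → x = ∅ ∨ x ∈ c := by
  induction r with
  | nil => intro c x h; simp [place] at h
  | cons m r ih =>
    intro c x h
    match m, c with
    | 0, c =>
      rcases List.mem_cons.1 h with rfl | h
      · exact Or.inl rfl
      · exact ih h
    | m+1, [] =>
      rcases List.mem_cons.1 h with rfl | h
      · exact Or.inl rfl
      · rcases ih h with h | h
        · exact Or.inl h
        · simp at h
    | m+1, B :: c =>
      rcases List.mem_cons.1 h with rfl | h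
      · exact Or.inr (by simp)
      · rcases ih h with h | h
        · exact Or.inl h
        · exact Or.inr (by simp [h])

lemma place_map_card {r : List ℕ} : ∀ {c : PSeq},
    c.map Finset.card = r.filter (· ≠ 0) → (place r c).map Finset.card = r := by
  induction r with
  | nil => intro c h; rfl
  | cons m r ih =>
    intro c h
    match m, c with
    | 0, c =>
      rw [filter_cons_zero] at h
      simp [place, ih h]
    | m+1, [] => rw [filter_cons_succ] at h; simp at h
    | m+1, B :: c =>
      rw [filter_cons_succ] at h
      simp only [List.map_cons, List.cons.injEq] at h
      simp [place, ih h.2, h.1]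

lemma place_filter {r : List ℕ} : ∀ {c : PSeq},
    c.map Finset.card = r.filter (· ≠ 0) → (place r c).filter (· ≠ ∅) = c := by
  induction r with
  | nil =>
    intro c h
    have : c = [] := by simpa using congrArg List.length h
    simp [this, place]
  | cons m r ih =>
    intro c h
    match m, c with
    | 0, c =>
      rw [filter_cons_zero] at h
      simp only [place, filter_cons_empty]
      exact ih h
    | m+1, [] => rw [filter_cons_succ] at h; simp at h
    | m+1, B :: c =>
      rw [filter_cons_succ] at h
      simp only [List.map_cons, List.cons.injEq] at h
      have hB : B ≠ ∅ := by
        intro hB; rw [hB] at h; simp at h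
      simp only [place, filter_cons_nonempty hB]
      rw [ih h.2]

lemma place_self (x : PSeq) :
    place (x.map Finset.card) (x.filter (· ≠ ∅)) = x := by
  induction x with
  | nil => rfl
  | cons B x ih =>
    by_cases hB : B = ∅
    · subst hB
      simp only [List.map_cons, Finset.card_empty, filter_cons_empty]
      simpa [place] using ih
    · have hc : B.card ≠ 0 := by simpa [Finset.card_eq_zero] using hB
      obtain ⟨m, hm⟩ := Nat.exists_eq_succ_of_ne_zero hc
      rw [List.map_cons, filter_cons_nonempty hB, hm]
      simpa [place] using ih

lemma place_unionOf {r : List ℕ} {c : PSeq}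
    (h : c.map Finset.card = r.filter (· ≠ 0)) : unionOf (place r c) = unionOf c := by
  conv_lhs => rw [← unionOf_filter_ne (place r c)]
  rw [place_filter h]

lemma place_pairwise {r : List ℕ} : ∀ {c : PSeq},
    c.Pairwise (fun S T => Disjoint S T) →
    (place r c).Pairwise (fun S T => Disjoint S T) := by
  induction r with
  | nil => intro c _; simp [place]
  | cons m r ih =>
    intro c hc
    match m, c with
    | 0, c =>
      refine List.pairwise_cons.2 ⟨fun x _ => by simp, ih hc⟩
    | m+1, [] =>
      refine List.pairwise_cons.2 ⟨fun x _ => by simp, ih (by simp)⟩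
    | m+1, B :: c =>
      refine List.pairwise_cons.2 ⟨fun x hx => ?_, ih (List.pairwise_cons.1 hc).2⟩
      rcases place_mem hx with rfl | hx
      · simp
      · exact (List.pairwise_cons.1 hc).1 x hx

end Aux2

section Aux2b
lemma filter_cons_ne_zero {m : ℕ} (h : m ≠ 0) (r : List ℕ) :
    (m :: r).filter (· ≠ 0) = m :: r.filter (· ≠ 0) := by simp [h]
end Aux2b
section Aux3

@[simp] lemma zipu_nil_left (v : PSeq) : zipu [] v = v := by cases v <;> rfl

@[simp] lemma zipu_nil_right (w : PSeq) : zipu w [] = w := by cases w <;> rfl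

@[simp] lemma zipu_cons (a b : Finset ℕ) (w v : PSeq) :
    zipu (a :: w) (b :: v) = (a ∪ b) :: zipu w v := rfl

@[simp] lemma zipu_length : ∀ (w v : PSeq), (zipu w v).length = max w.length v.length
  | [], v => by simp
  | w, [] => by simp
  | a :: w, b :: v => by simp [zipu_length w v]

@[simp] lemma zipu_unionOf : ∀ (w v : PSeq), unionOf (zipu w v) = unionOf w ∪ unionOf v
  | [], v => by simp
  | w, [] => by simp
  | a :: w, b :: v => by
    simp only [zipu_cons, unionOf_cons, zipu_unionOf w v]
    ext t; simp; tauto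

lemma zipu_map_inter (W : Finset ℕ) : ∀ (w v : PSeq),
    (zipu w v).map (fun T => W ∩ T) = zipu (w.map fun T => W ∩ T) (v.map fun T => W ∩ T)
  | [], v => by simp
  | w, [] => by simp
  | a :: w, b :: v => by
    simp [zipu_map_inter W w v, Finset.inter_union_distrib_left]

lemma zipu_left_absorb : ∀ {w v : PSeq}, (∀ B ∈ v, B = ∅) → v.length ≤ w.length →
    zipu w v = w
  | w, [], _, _ => by simp
  | [], b :: v, h, hl => by simp at hl
  | a :: w, b :: v, h, hl => by
    have hb : b = ∅ := h b (by simp)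
    rw [zipu_cons, hb, Finset.union_empty,
      zipu_left_absorb (fun B hB => h B (by simp [hB])) (by simpa using hl)]

lemma zipu_right_absorb : ∀ {w v : PSeq}, (∀ B ∈ w, B = ∅) → w.length ≤ v.length →
    zipu w v = v
  | [], v, _, _ => by simp
  | a :: w, [], h, hl => by simp at hl
  | a :: w, b :: v, h, hl => by
    have ha : a = ∅ := h a (by simp)
    rw [zipu_cons, ha, Finset.empty_union,
      zipu_right_absorb (fun B hB => h B (by simp [hB])) (by simpa using hl)]

lemma zipu_map_map (f g : Finset ℕ → Finset ℕ) (v : PSeq) :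
    zipu (v.map f) (v.map g) = v.map fun T => f T ∪ g T := by
  induction v with
  | nil => simp
  | cons b v ih => simp [ih]

lemma mem_zipu_subset : ∀ {w v : PSeq} {x : Finset ℕ}, x ∈ zipu w v →
    x ⊆ unionOf w ∪ unionOf v
  | [], v, x, h => by
    rw [zipu_nil_left] at h
    exact (subset_unionOf h).trans Finset.subset_union_right
  | w, [], x, h => by
    rw [zipu_nil_right] at h
    exact (subset_unionOf h).trans Finset.subset_union_left
  | a :: w, b :: v, x, h => by
    rcases List.mem_cons.1 h with rfl | h
    · intro t ht
      rcases Finset.mem_union.1 ht with ht | ht <;> simp [ht]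
    · refine (mem_zipu_subset h).trans ?_
      intro t ht
      simp only [unionOf_cons, Finset.mem_union] at ht ⊢
      tauto

lemma zipu_pairwise : ∀ {w v : PSeq},
    w.Pairwise (fun S T => Disjoint S T) → v.Pairwise (fun S T => Disjoint S T) →
    (∀ x ∈ w, ∀ y ∈ v, Disjoint x y) →
    (zipu w v).Pairwise (fun S T => Disjoint S T)
  | [], v, _, hv, _ => by simpa using hv
  | w, [], hw, _, _ => by simpa using hw
  | a :: w, b :: v, hw, hv, hcross => by
    rw [zipu_cons]
    refine List.pairwise_cons.2 ⟨fun z hz => ?_, zipu_pairwise hw.of_cons hv.of_cons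
      (fun x hx y hy => hcross x (by simp [hx]) y (by simp [hy]))⟩
    have hz' := mem_zipu_subset hz
    refine Finset.disjoint_of_subset_right hz' ?_
    have h1 : Disjoint a (unionOf w) :=
      disjoint_unionOf_right fun x hx => (List.pairwise_cons.1 hw).1 x hx
    have h2 : Disjoint a (unionOf v) :=
      disjoint_unionOf_right fun y hy => hcross a (by simp) y (by simp [hy])
    have h3 : Disjoint b (unionOf w) :=
      disjoint_unionOf_right fun x hx => (hcross x (by simp [hx]) b (by simp)).symm
    have h4 : Disjoint b (unionOf v) :=
      disjoint_unionOf_right fun y hy => (List.pairwise_cons.1 hv).1 y hy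
    simp only [Finset.disjoint_union_left, Finset.disjoint_union_right]
    exact ⟨⟨h1, h3⟩, h2, h4⟩

end Aux3
section Aux4

@[simp] lemma refines_nil (v : PSeq) : refines [] v = [] := rfl

lemma refines_cons (S : Finset ℕ) (w v : PSeq) :
    refines (S :: w) v = ((v.map fun T => S ∩ T).filter (· ≠ ∅)) ++ refines w v := rfl

@[simp] lemma matRows_nil (v : PSeq) : matRows [] v = [] := rfl

lemma matRows_cons (S : Finset ℕ) (w v : PSeq) :
    matRows (S :: w) v = (v.map fun T => (S ∩ T).card) :: matRows w v := rfl

lemma mem_refines_subset {w v : PSeq} {x : Finset ℕ} (h : x ∈ refines w v) :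
    x ⊆ unionOf w := by
  induction w with
  | nil => simp at h
  | cons S w ih =>
    rw [refines_cons] at h
    rcases List.mem_append.1 h with h | h
    · have := List.mem_map.1 (List.mem_of_mem_filter h)
      obtain ⟨T, _, rfl⟩ := this
      exact Finset.inter_subset_left.trans Finset.subset_union_left
    · exact (ih h).trans Finset.subset_union_right

lemma mem_refines_ne {w v : PSeq} {x : Finset ℕ} (h : x ∈ refines w v) : x ≠ ∅ := by
  induction w with
  | nil => simp at h
  | cons S w ih =>
    rw [refines_cons] at h
    rcases List.mem_append.1 h with h | h
    · simpa using List.of_mem_filter h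
    · exact ih h

lemma refines_pairwise {w v : PSeq}
    (hw : w.Pairwise (fun S T => Disjoint S T))
    (hv : v.Pairwise (fun S T => Disjoint S T)) :
    (refines w v).Pairwise (fun S T => Disjoint S T) := by
  induction w with
  | nil => simp
  | cons S w ih =>
    rw [refines_cons]
    refine List.pairwise_append.2 ⟨?_, ih hw.of_cons, ?_⟩
    · refine List.Pairwise.sublist List.filter_sublist ?_
      refine List.Pairwise.map _ (fun a b hab => ?_) hv
      exact Finset.disjoint_of_subset_left Finset.inter_subset_right
        (Finset.disjoint_of_subset_right Finset.inter_subset_right hab)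
    · intro x hx y hy
      have hxS : x ⊆ S := by
        obtain ⟨T, _, rfl⟩ := List.mem_map.1 (List.mem_of_mem_filter hx)
        exact Finset.inter_subset_left
      have hyW : y ⊆ unionOf w := mem_refines_subset hy
      refine Finset.disjoint_of_subset_left hxS (Finset.disjoint_of_subset_right hyW ?_)
      exact disjoint_unionOf_right fun z hz => (List.pairwise_cons.1 hw).1 z hz

lemma unionOf_refines (w v : PSeq) :
    unionOf (refines w v) = unionOf w ∩ unionOf v := by
  induction w with
  | nil => simp
  | cons S w ih =>
    rw [refines_cons, unionOf_append, ih, unionOf_filter_ne, unionOf_map_inter]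
    ext t; simp; tauto

lemma row_map_card (S : Finset ℕ) (v : PSeq) :
    ((v.map fun T => S ∩ T).filter (· ≠ ∅)).map Finset.card
      = (v.map fun T => (S ∩ T).card).filter (· ≠ 0) := by
  induction v with
  | nil => rfl
  | cons T v ih =>
    by_cases h : S ∩ T = ∅
    · have hc : (S ∩ T).card = 0 := by simp [h]
      simp only [List.map_cons, h, hc, filter_cons_empty, filter_cons_zero]
      exact ih
    · have hc : (S ∩ T).card ≠ 0 := by simpa [Finset.card_eq_zero] using h
      rw [List.map_cons, List.map_cons, filter_cons_nonempty h, filter_cons_ne_zero hc,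
        List.map_cons, ih]

lemma refines_map_card (w v : PSeq) :
    (refines w v).map Finset.card
      = (matRows w v).flatMap fun r => r.filter (· ≠ 0) := by
  induction w with
  | nil => simp
  | cons S w ih =>
    rw [refines_cons, List.map_append, matRows_cons, List.flatMap_cons, ih, row_map_card]

end Aux4
section Aux5

lemma rowBlocks_length (S : Finset ℕ) (v : PSeq) :
    ((v.map fun T => S ∩ T).filter (· ≠ ∅)).length
      = (((v.map fun T => (S ∩ T).card)).filter (· ≠ 0)).length := by
  rw [← row_map_card, List.length_map]

lemma chunks_matRows_refines : ∀ (w v : PSeq),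
    chunks (matRows w v) (refines w v) = w.map fun Si => Si ∩ unionOf v := by
  intro w v
  induction w with
  | nil => simp [chunks]
  | cons S w ih =>
    rw [matRows_cons, refines_cons, chunks]
    rw [← rowBlocks_length, List.take_left', List.drop_left', ih]
    · rw [unionOf_filter_ne, unionOf_map_inter]
      rfl
    · rfl
    · rfl

lemma cols_matRows_refines : ∀ (w v : PSeq), w ≠ [] →
    cols (matRows w v) (refines w v) = v.map fun T => unionOf w ∩ T := by
  intro w
  induction w with
  | nil => intro v h; simp at h
  | cons S w ih =>
    intro v _
    rw [matRows_cons, refines_cons, cols, ← rowBlocks_length, List.take_left',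
      List.drop_left']
    rotate_left
    · rfl
    · rfl
    have hplace : place (v.map fun T => (S ∩ T).card) ((v.map fun T => S ∩ T).filter (· ≠ ∅))
        = v.map fun T => S ∩ T := by
      have := place_self (v.map fun T => S ∩ T)
      rwa [List.map_map] at this
    rcases eq_or_ne w [] with rfl | hw
    · rw [hplace]
      simp only [matRows_nil, refines_nil, cols, zipu_nil_right]
      refine List.map_congr_left fun T hT => ?_
      simp [Finset.union_empty]
    · rw [hplace, ih v hw, zipu_map_map]
      refine List.map_congr_left fun T hT => ?_
      rw [unionOf_cons, Finset.union_inter_distrib_right]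

end Aux5
section Aux6

lemma refines_congr {w v₁ v₂ : PSeq}
    (h : ∀ Si ∈ w, v₁.map (fun T => Si ∩ T) = v₂.map fun T => Si ∩ T) :
    refines w v₁ = refines w v₂ := by
  induction w with
  | nil => rfl
  | cons S w ih =>
    rw [refines_cons, refines_cons, h S (by simp), ih fun Si hSi => h Si (by simp [hSi])]

@[simp] lemma chunks_length : ∀ (R : List (List ℕ)) (u : PSeq), (chunks R u).length = R.length
  | [], _ => rfl
  | r :: R, u => by simp [chunks, chunks_length R]

lemma monster {l : ℕ} : ∀ (R : List (List ℕ)) (u : PSeq),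
    (∀ r ∈ R, r.length = l) →
    u.Pairwise (fun S T => Disjoint S T) →
    (u.map Finset.card = R.flatMap fun r => r.filter (· ≠ 0)) →
    matRows (chunks R u) (cols R u) = R ∧
    refines (chunks R u) (cols R u) = u ∧
    (chunks R u).Pairwise (fun S T => Disjoint S T) ∧
    (cols R u).Pairwise (fun S T => Disjoint S T) ∧
    unionOf (chunks R u) = unionOf u ∧
    unionOf (cols R u) = unionOf u ∧
    (R ≠ [] → (cols R u).length = l) := by
  intro R
  induction R with
  | nil =>
    intro u _ _ hcard
    have hu : u = [] := by simpa using congrArg List.length hcard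
    subst hu
    exact ⟨rfl, rfl, by simp [chunks], by simp [cols], by simp [chunks], by simp [cols],
      fun h => absurd rfl h⟩
  | cons r R ih =>
    intro u hlen hu hcard
    have hcard' : u.map Finset.card
        = (r.filter (· ≠ 0)) ++ (R.flatMap fun r => r.filter (· ≠ 0)) := by
      simpa [List.flatMap_cons] using hcard
    set t := (r.filter (· ≠ 0)).length with ht
    have h1 : (u.take t).map Finset.card = r.filter (· ≠ 0) := by
      rw [List.map_take, hcard', ht, List.take_left]
    have h2 : (u.drop t).map Finset.card = R.flatMap fun r => r.filter (· ≠ 0) := by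
      rw [List.map_drop, hcard', ht, List.drop_left]
    have hu₁ : (u.take t).Pairwise (fun S T => Disjoint S T) :=
      hu.sublist (List.take_sublist t u)
    have hu₂ : (u.drop t).Pairwise (fun S T => Disjoint S T) :=
      hu.sublist (List.drop_sublist t u)
    have hcross : ∀ x ∈ u.take t, ∀ y ∈ u.drop t, Disjoint x y := by
      have h := hu
      rw [← List.take_append_drop t u, List.pairwise_append] at h
      exact h.2.2
    obtain ⟨ihb, iha, ihc, ihd, ihe, ihf, ihh⟩ :=
      ih (u.drop t) (fun r hr => hlen r (by simp [hr])) hu₂ h2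
    set W := unionOf (u.take t) with hW
    set p := place r (u.take t) with hp
    set w' := chunks R (u.drop t) with hw'
    set v' := cols R (u.drop t) with hv'
    have hchunks : chunks (r :: R) u = W :: w' := rfl
    have hcols : cols (r :: R) u = zipu p v' := rfl
    have hpW : ∀ x ∈ p, x ⊆ W := by
      intro x hx
      rcases place_mem hx with rfl | hx
      · exact Finset.empty_subset _
      · exact subset_unionOf hx
    have hWu2 : Disjoint W (unionOf (u.drop t)) := by
      refine disjoint_unionOf_right fun y hy => ?_
      exact (disjoint_unionOf_right fun x hx => (hcross x hx y hy).symm).symm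
    have hw'sub : ∀ x ∈ w', x ⊆ unionOf (u.drop t) := fun x hx => ihe ▸ subset_unionOf hx
    have hv'sub : ∀ x ∈ v', x ⊆ unionOf (u.drop t) := fun x hx => ihf ▸ subset_unionOf hx
    have hplen : p.length = l := by rw [hp, place_length]; exact hlen r (by simp)
    have hv'len : v'.length ≤ l := by
      rcases eq_or_ne R [] with rfl | hR
      · simp [hv', cols]
      · exact le_of_eq (ihh hR)
    have hA : (zipu p v').map (fun T => W ∩ T) = p := by
      rw [zipu_map_inter]
      have e1 : p.map (fun T => W ∩ T) = p :=
        (List.map_congr_left fun x hx =>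
          (Finset.inter_eq_right.2 (hpW x hx) : W ∩ x = id x)).trans (List.map_id p)
      have e2 : ∀ B ∈ v'.map (fun T => W ∩ T), B = ∅ := by
        intro B hB
        obtain ⟨y, hy, rfl⟩ := List.mem_map.1 hB
        exact Finset.disjoint_iff_inter_eq_empty.1
          (Finset.disjoint_of_subset_right (hv'sub y hy) hWu2)
      rw [e1, zipu_left_absorb e2 (by simp [hplen]; omega)]
    have hB : ∀ Si ∈ w', (zipu p v').map (fun T => Si ∩ T) = v'.map fun T => Si ∩ T := by
      intro Si hSi
      have hR : R ≠ [] := by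
        intro hR; rw [hR] at hw'; simp [chunks] at hw'; rw [hw'] at hSi; simp at hSi
      have hSiu2 : Si ⊆ unionOf (u.drop t) := hw'sub Si hSi
      rw [zipu_map_inter]
      have e1 : ∀ B ∈ p.map (fun T => Si ∩ T), B = ∅ := by
        intro B hB'
        obtain ⟨x, hx, rfl⟩ := List.mem_map.1 hB'
        exact Finset.disjoint_iff_inter_eq_empty.1
          (Finset.disjoint_of_subset_left hSiu2
            (Finset.disjoint_of_subset_right (hpW x hx) hWu2.symm))
      rw [zipu_right_absorb e1 (by simp [hplen, ihh hR])]
    refine ⟨?_, ?_, ?_, ?_, ?_, ?_, ?_⟩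
    · rw [hchunks, hcols, matRows_cons]
      congr 1
      · have : (fun T => (W ∩ T).card) = Finset.card ∘ (fun T => W ∩ T) := rfl
        rw [this, ← List.map_map, hA, hp, place_map_card h1]
      · rw [← ihb]
        unfold matRows
        refine List.map_congr_left fun Si hSi => ?_
        have : (fun T => (Si ∩ T).card) = Finset.card ∘ (fun T => Si ∩ T) := rfl
        rw [this, ← List.map_map, hB Si hSi, List.map_map]
    · rw [hchunks, hcols, refines_cons, hA, hp, place_filter h1]
      rw [refines_congr (fun Si hSi => hB Si hSi), iha, List.take_append_drop]
    · rw [hchunks]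
      refine List.pairwise_cons.2 ⟨fun x hx => ?_, ihc⟩
      exact Finset.disjoint_of_subset_right (hw'sub x hx) hWu2
    · rw [hcols]
      refine zipu_pairwise (place_pairwise hu₁) ihd fun x hx y hy => ?_
      exact Finset.disjoint_of_subset_left (hpW x hx)
        (Finset.disjoint_of_subset_right (hv'sub y hy) hWu2)
    · rw [hchunks, unionOf_cons, ihe, hW, ← unionOf_append, List.take_append_drop]
    · rw [hcols, zipu_unionOf, hp, place_unionOf h1, ihf, ← hW, ← unionOf_append,
        List.take_append_drop]
    · intro _
      rw [hcols, zipu_length, hplen]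
      omega

end Aux6
section Aux7

/-- The rows of a matrix, as a list of lists. -/
def rowsOf {m n : ℕ} (a : Fin m → Fin n → ℕ) : List (List ℕ) :=
  List.ofFn fun i => List.ofFn (a i)

/-- The matrix of intersection cardinalities of two sequences. -/
def aOf (m n : ℕ) (w v : PSeq) : Fin m → Fin n → ℕ := fun i j =>
  ((w.getD i ∅) ∩ (v.getD j ∅)).card

lemma matComp_eq {m n : ℕ} (a : Fin m → Fin n → ℕ) :
    matComp a = (rowsOf a).flatMap fun r => r.filter (· ≠ 0) := by
  simp only [matComp, rowsOf, List.ofFn_eq_map, List.flatMap_map]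

lemma rowsOf_length {m n : ℕ} (a : Fin m → Fin n → ℕ) : (rowsOf a).length = m := by
  simp [rowsOf]

lemma mem_rowsOf_length {m n : ℕ} (a : Fin m → Fin n → ℕ) :
    ∀ r ∈ rowsOf a, r.length = n := by
  intro r hr
  obtain ⟨i, rfl⟩ := List.mem_ofFn.1 hr
  simp

lemma ofFn_getD {α β : Type*} (d : α) (f : α → β) :
    ∀ (x : List α) (n : ℕ), x.length = n →
      List.ofFn (fun i : Fin n => f (x.getD (i : ℕ) d)) = x.map f := by
  intro x
  induction x with
  | nil => intro n hn; subst hn; simp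
  | cons b x ih =>
    intro n hn
    subst hn
    rw [List.ofFn_succ]
    simp only [List.getD_cons_zero, List.getD_cons_succ, List.map_cons]
    congr 1
    exact ih x.length rfl

lemma sum_map_fin {α : Type*} (d : α) (f : α → ℕ) (x : List α) (n : ℕ)
    (h : x.length = n) :
    (x.map f).sum = ∑ i : Fin n, f (x.getD (i : ℕ) d) := by
  rw [← ofFn_getD d f x n h, List.sum_ofFn]

lemma rowsOf_aOf {m n : ℕ} {w v : PSeq} (hw : w.length = m) (hv : v.length = n) :
    rowsOf (aOf m n w v) = matRows w v := by
  unfold rowsOf aOf matRows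
  have inner : ∀ Si : Finset ℕ,
      List.ofFn (fun j : Fin n => (Si ∩ v.getD (j : ℕ) ∅).card)
        = v.map fun Tj => (Si ∩ Tj).card :=
    fun Si => ofFn_getD ∅ (fun T => (Si ∩ T).card) v n hv
  calc List.ofFn (fun i : Fin m => List.ofFn fun j : Fin n =>
          ((w.getD (i : ℕ) ∅) ∩ (v.getD (j : ℕ) ∅)).card)
      = List.ofFn (fun i : Fin m => (fun Si => v.map fun Tj => (Si ∩ Tj).card)
          (w.getD (i : ℕ) ∅)) := by
        refine congrArg _ (funext fun i => inner _)
    _ = w.map fun Si => v.map fun Tj => (Si ∩ Tj).card :=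
        ofFn_getD ∅ (fun Si => v.map fun Tj => (Si ∩ Tj).card) w m hw

lemma rowsOf_getD {m n : ℕ} (a : Fin m → Fin n → ℕ) (i : Fin m) (j : Fin n) :
    ((rowsOf a).getD (i : ℕ) []).getD (j : ℕ) 0 = a i j := by
  have h1 : (rowsOf a).getD (i : ℕ) [] = List.ofFn (a i) := by
    rw [List.getD_eq_getElem _ _ (by simpa [rowsOf] using i.isLt)]
    simp [rowsOf]
  rw [h1, List.getD_eq_getElem _ _ (by simpa using j.isLt)]
  simp

lemma rowsOf_injective {m n : ℕ} {a b : Fin m → Fin n → ℕ}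
    (h : rowsOf a = rowsOf b) : a = b := by
  funext i j
  rw [← rowsOf_getD a i j, ← rowsOf_getD b i j, h]

lemma rowsOf_map_sum {m n : ℕ} (a : Fin m → Fin n → ℕ) :
    (rowsOf a).map List.sum = List.ofFn fun i => ∑ j, a i j := by
  unfold rowsOf
  rw [List.map_ofFn]
  exact congrArg _ (funext fun i => List.sum_ofFn)

end Aux7
section Aux8

variable {k : Type} [CommRing k]

lemma sum_map_inter_card' {w : PSeq} (hw : w.Pairwise (fun S T => Disjoint S T))
    (T : Finset ℕ) :
    (w.map fun Si => (Si ∩ T).card).sum = (unionOf w ∩ T).card := by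
  have : (fun Si => (Si ∩ T).card) = fun Si : Finset ℕ => (T ∩ Si).card := by
    funext Si; rw [Finset.inter_comm]
  rw [this, sum_map_inter_card hw, Finset.inter_comm]

lemma map_card_of_matRows {w v : PSeq} (hv : v.Pairwise (fun S T => Disjoint S T))
    (hsub : ∀ Si ∈ w, Si ⊆ unionOf v) :
    (matRows w v).map List.sum = w.map Finset.card := by
  unfold matRows
  rw [List.map_map]
  refine List.map_congr_left fun Si hSi => ?_
  show (v.map fun Tj => (Si ∩ Tj).card).sum = Si.card
  rw [sum_map_inter_card hv, Finset.inter_eq_left.2 (hsub Si hSi)]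

lemma empty_partition {v : PSeq} (h : unionOf v = ∅) (hne : ∀ B ∈ v, B ≠ ∅) :
    v = [] := by
  cases v with
  | nil => rfl
  | cons B v =>
    exfalso
    refine hne B (by simp) ?_
    have : B ⊆ ∅ := h ▸ subset_unionOf (by simp)
    simpa [Finset.subset_empty] using this

/-- Lists of length `n` with entries among subsets of `S`. -/
def listsF (S : Finset ℕ) : ℕ → Finset PSeq
  | 0 => {([] : PSeq)}
  | n+1 => (S.powerset ×ˢ listsF S n).image fun p => p.1 :: p.2

lemma mem_listsF {S : Finset ℕ} : ∀ {n : ℕ} {w : PSeq},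
    w.length = n → (∀ T ∈ w, T ⊆ S) → w ∈ listsF S n := by
  intro n
  induction n with
  | zero => intro w hl _; rw [List.length_eq_zero_iff] at hl; simp [hl, listsF]
  | succ n ih =>
    intro w hl hsub
    match w with
    | T :: w =>
      refine Finset.mem_image.2 ⟨(T, w), ?_, rfl⟩
      refine Finset.mem_product.2 ⟨Finset.mem_powerset.2 (hsub T (by simp)), ?_⟩
      exact ih (by simpa using hl) fun U hU => hsub U (by simp [hU])

/-- The ordered partitions of `S` of type `C`, as a finite set. -/
def partF (S : Finset ℕ) (C : List ℕ) : Finset PackedSeq :=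
  ((listsF S C.length).subtype Packed).filter fun w =>
    unionOf w.1 = S ∧ w.1.map Finset.card = C

lemma mem_partF {S : Finset ℕ} {C : List ℕ} {w : PackedSeq} :
    w ∈ partF S C ↔ unionOf w.1 = S ∧ w.1.map Finset.card = C := by
  constructor
  · intro h
    exact (Finset.mem_filter.1 h).2
  · intro h
    refine Finset.mem_filter.2 ⟨Finset.mem_subtype.2 ?_, h⟩
    refine mem_listsF ?_ fun T hT => ?_
    · rw [← h.2, List.length_map]
    · exact h.1 ▸ subset_unionOf hT

lemma oneC_eq_sum (C : List ℕ) (S : Finset ℕ) :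
    oneC k C S = ∑ w ∈ partF S C, Finsupp.single w (1 : k) := by
  rw [oneC, finsum_eq_finset_sum_of_support_subset _ (s := partF S C) ?_]
  · refine Finset.sum_congr rfl fun w hw => ?_
    rw [if_pos (mem_partF.1 hw)]
  · intro w hw
    simp only [Function.mem_support, ne_eq] at hw
    by_cases h : unionOf w.1 = S ∧ w.1.map Finset.card = C
    · exact Finset.mem_coe.2 (mem_partF.2 h)
    · simp [if_neg h] at hw

lemma compL_single_single (w v : PackedSeq) :
    compL k (Finsupp.single w (1 : k)) (Finsupp.single v (1 : k)) = compB k w.1 v.1 := by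
  rw [compL, Finsupp.lsum_single, LinearMap.toSpanSingleton_apply, one_smul,
    Finsupp.lsum_single, LinearMap.toSpanSingleton_apply, one_smul]

lemma compB_eq {w v : PackedSeq} {S : Finset ℕ} (hw : unionOf w.1 = S)
    (hv : unionOf v.1 = S) :
    compB k w.1 v.1
      = Finsupp.single (⟨refines w.1 v.1,
          ⟨refines_pairwise w.2.1 v.2.1, fun x hx => mem_refines_ne hx⟩⟩ : PackedSeq)
          (1 : k) := by
  rw [compB, if_pos (hw.trans hv.symm), mk,
    dif_pos ⟨refines_pairwise w.2.1 v.2.1, fun x hx => mem_refines_ne hx⟩]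

end Aux8

section Main

variable {k : Type} [CommRing k]

lemma get_eq_card_getD {w : PSeq} {D : List ℕ} (h : w.map Finset.card = D)
    (i : Fin D.length) : D.get i = (w.getD (i : ℕ) ∅).card := by
  subst h
  rw [List.get_eq_getElem, List.getElem_map, List.getD_eq_getElem _ _ (by simpa using i.isLt)]

lemma getD_mem_of_lt {v : PSeq} {j : ℕ} (h : j < v.length) : v.getD j ∅ ∈ v := by
  rw [List.getD_eq_getElem _ _ h]
  exact List.getElem_mem h

/-- Solomon's multiplication rule: for `|S| = n` and
compositions `C = (n_1,…,n_k)`, `C' = (m_1,…,m_l)` of `n`,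
`1_C(S) ∘ 1_{C'}(S) = Σ_a 1_{C(a)}(S)`, summed over all `k×l` matrices of
nonnegative integers with row sums `n_i` and column sums `m_j`, where `C(a)`
is obtained by reading the entries row by row and deleting the zeros. -/
theorem solomon_multiplication_rule (k : Type) [CommRing k]
    (S : Finset ℕ) (C C' : List ℕ)
    (hC : ∀ i ∈ C, 0 < i) (hCsum : C.sum = S.card)
    (hC' : ∀ j ∈ C', 0 < j) (hC'sum : C'.sum = S.card) :
    compL k (oneC k C S) (oneC k C' S)
      = ∑ᶠ a : Fin C.length → Fin C'.length → ℕ,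
          if (∀ i, ∑ j, a i j = C.get i) ∧ (∀ j, ∑ i, a i j = C'.get j) then
            oneC k (matComp a) S
          else 0 := by
  classical
  set piF : Finset (Fin C.length → Fin C'.length → ℕ) :=
    Fintype.piFinset (fun _ : Fin C.length =>
      Fintype.piFinset fun _ : Fin C'.length => Finset.range (S.card + 1)) with hpiF
  -- generic facts about members of partF
  have hlenW : ∀ {D : List ℕ} (w : PackedSeq), w ∈ partF S D → w.1.length = D.length :=
    fun {D} w hw => by rw [← (mem_partF.1 hw).2, List.length_map]
  have hsubW : ∀ {D : List ℕ} (w : PackedSeq), w ∈ partF S D →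
      ∀ {T : Finset ℕ}, T ∈ w.1 → T ⊆ S :=
    fun {D} w hw {T} hT => by rw [← (mem_partF.1 hw).1]; exact subset_unionOf hT
  -- the row and column sums of `aOf` are `C` and `C'`
  have hrowcol : ∀ (w v : PackedSeq), w ∈ partF S C → v ∈ partF S C' →
      (∀ i, ∑ j, aOf C.length C'.length w.1 v.1 i j = C.get i) ∧
      (∀ j, ∑ i, aOf C.length C'.length w.1 v.1 i j = C'.get j) := by
    intro w v hw hv
    have hwl := hlenW w hw
    have hvl := hlenW v hv
    constructor
    · intro i
      have hi : (i : ℕ) < w.1.length := by rw [hwl]; exact i.isLt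
      have hSi : w.1.getD (i : ℕ) ∅ ∈ w.1 := getD_mem_of_lt hi
      calc ∑ j, aOf C.length C'.length w.1 v.1 i j
          = (v.1.map fun T => ((w.1.getD (i : ℕ) ∅) ∩ T).card).sum :=
            (sum_map_fin ∅ (fun T => ((w.1.getD (i : ℕ) ∅) ∩ T).card) v.1 C'.length hvl).symm
        _ = ((w.1.getD (i : ℕ) ∅) ∩ unionOf v.1).card := sum_map_inter_card v.2.1 _
        _ = (w.1.getD (i : ℕ) ∅).card := by
            rw [(mem_partF.1 hv).1, Finset.inter_eq_left.2 (hsubW w hw hSi)]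
        _ = C.get i := (get_eq_card_getD (mem_partF.1 hw).2 i).symm
    · intro j
      have hj : (j : ℕ) < v.1.length := by rw [hvl]; exact j.isLt
      have hTj : v.1.getD (j : ℕ) ∅ ∈ v.1 := getD_mem_of_lt hj
      calc ∑ i, aOf C.length C'.length w.1 v.1 i j
          = (w.1.map fun Si => (Si ∩ (v.1.getD (j : ℕ) ∅)).card).sum :=
            (sum_map_fin ∅ (fun Si => (Si ∩ (v.1.getD (j : ℕ) ∅)).card) w.1 C.length hwl).symm
        _ = (unionOf w.1 ∩ (v.1.getD (j : ℕ) ∅)).card := sum_map_inter_card' w.2.1 _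
        _ = (v.1.getD (j : ℕ) ∅).card := by
            rw [(mem_partF.1 hw).1, Finset.inter_eq_right.2 (hsubW v hv hTj)]
        _ = C'.get j := (get_eq_card_getD (mem_partF.1 hv).2 j).symm
  -- membership of the forward matrix
  have hmemA : ∀ (w v : PackedSeq), w ∈ partF S C → v ∈ partF S C' →
      aOf C.length C'.length w.1 v.1 ∈ piF.filter (fun a =>
        (∀ i, ∑ j, a i j = C.get i) ∧ (∀ j, ∑ i, a i j = C'.get j)) := by
    intro w v hw hv
    refine Finset.mem_filter.2 ⟨?_, hrowcol w v hw hv⟩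
    refine Fintype.mem_piFinset.2 fun i => Fintype.mem_piFinset.2 fun j => ?_
    refine Finset.mem_range.2 (Nat.lt_succ_of_le ?_)
    calc aOf C.length C'.length w.1 v.1 i j
        ≤ ∑ j', aOf C.length C'.length w.1 v.1 i j' :=
          Finset.single_le_sum (fun _ _ => Nat.zero_le _) (Finset.mem_univ j)
      _ = C.get i := (hrowcol w v hw hv).1 i
      _ ≤ C.sum := List.single_le_sum (fun _ _ => Nat.zero_le _) _ (List.get_mem C _)
      _ = S.card := hCsum
  -- membership of the refinement
  have hmemR : ∀ (w v : PackedSeq), w ∈ partF S C → v ∈ partF S C' →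
      (⟨refines w.1 v.1, refines_pairwise w.2.1 v.2.1,
        fun y hy => mem_refines_ne hy⟩ : PackedSeq)
        ∈ partF S (matComp (aOf C.length C'.length w.1 v.1)) := by
    intro w v hw hv
    refine mem_partF.2 ⟨?_, ?_⟩
    · rw [unionOf_refines, (mem_partF.1 hw).1, (mem_partF.1 hv).1, Finset.inter_self]
    · rw [refines_map_card, matComp_eq, rowsOf_aOf (hlenW w hw) (hlenW v hv)]
  -- recovery of `w` and `v` from the matrix and the refinement
  have recw : ∀ (w v : PackedSeq), w ∈ partF S C → v ∈ partF S C' →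
      chunks (matRows w.1 v.1) (refines w.1 v.1) = w.1 := by
    intro w v hw hv
    rw [chunks_matRows_refines]
    refine (List.map_congr_left fun Si hSi => ?_).trans (List.map_id w.1)
    show Si ∩ unionOf v.1 = id Si
    rw [(mem_partF.1 hv).1, id_eq, Finset.inter_eq_left]
    exact hsubW w hw hSi
  have recv : ∀ (w v : PackedSeq), w ∈ partF S C → v ∈ partF S C' →
      cols (matRows w.1 v.1) (refines w.1 v.1) = v.1 := by
    intro w v hw hv
    rcases eq_or_ne w.1 [] with h0 | h0
    · have hS : S = ∅ := by rw [← (mem_partF.1 hw).1, h0]; rfl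
      have hv0 : v.1 = [] := empty_partition (by rw [(mem_partF.1 hv).1, hS]) v.2.2
      rw [h0, hv0]; rfl
    · rw [cols_matRows_refines _ _ h0]
      refine (List.map_congr_left fun T hT => ?_).trans (List.map_id v.1)
      show unionOf w.1 ∩ T = id T
      rw [(mem_partF.1 hw).1, id_eq, Finset.inter_eq_right]
      exact hsubW v hv hT
  -- convert both sides to sums over sigma types
  have hsupp : Function.support (fun a : Fin C.length → Fin C'.length → ℕ =>
      if (∀ i, ∑ j, a i j = C.get i) ∧ (∀ j, ∑ i, a i j = C'.get j) then
        oneC k (matComp a) S else 0) ⊆ ↑piF := by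
    intro a ha
    simp only [Function.mem_support, ne_eq] at ha
    by_cases h : (∀ i, ∑ j, a i j = C.get i) ∧ (∀ j, ∑ i, a i j = C'.get j)
    · refine Finset.mem_coe.2
        (Fintype.mem_piFinset.2 fun i => Fintype.mem_piFinset.2 fun j => ?_)
      refine Finset.mem_range.2 (Nat.lt_succ_of_le ?_)
      calc a i j ≤ ∑ j', a i j' :=
            Finset.single_le_sum (fun _ _ => Nat.zero_le _) (Finset.mem_univ j)
        _ = C.get i := h.1 i
        _ ≤ C.sum := List.single_le_sum (fun _ _ => Nat.zero_le _) _ (List.get_mem C _)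
        _ = S.card := hCsum
    · rw [if_neg h] at ha
      exact absurd rfl ha
  have hL : compL k (oneC k C S) (oneC k C' S)
      = ∑ x ∈ (partF S C).sigma (fun _ => partF S C'), compB k x.1.1 x.2.1 := by
    rw [oneC_eq_sum, oneC_eq_sum]
    calc compL k (∑ w ∈ partF S C, Finsupp.single w (1 : k))
          (∑ v ∈ partF S C', Finsupp.single v (1 : k))
        = ∑ w ∈ partF S C, compL k (Finsupp.single w (1 : k))
            (∑ v ∈ partF S C', Finsupp.single v (1 : k)) := by
          rw [map_sum (compL k) _ (partF S C), LinearMap.sum_apply]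
      _ = ∑ w ∈ partF S C, ∑ v ∈ partF S C', compB k w.1 v.1 :=
          Finset.sum_congr rfl fun w _ => by
            rw [map_sum]
            exact Finset.sum_congr rfl fun v _ => compL_single_single w v
      _ = _ := Finset.sum_sigma' _ _ _
  have hR : (∑ᶠ a : Fin C.length → Fin C'.length → ℕ,
        if (∀ i, ∑ j, a i j = C.get i) ∧ (∀ j, ∑ i, a i j = C'.get j) then
          oneC k (matComp a) S else 0)
      = ∑ x ∈ (piF.filter (fun a =>
            (∀ i, ∑ j, a i j = C.get i) ∧ (∀ j, ∑ i, a i j = C'.get j))).sigma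
              (fun a => partF S (matComp a)),
          Finsupp.single x.2 (1 : k) := by
    calc (∑ᶠ a : Fin C.length → Fin C'.length → ℕ,
          if (∀ i, ∑ j, a i j = C.get i) ∧ (∀ j, ∑ i, a i j = C'.get j) then
            oneC k (matComp a) S else 0)
        = ∑ a ∈ piF, if (∀ i, ∑ j, a i j = C.get i) ∧ (∀ j, ∑ i, a i j = C'.get j) then
            oneC k (matComp a) S else 0 :=
          finsum_eq_finset_sum_of_support_subset _ hsupp
      _ = ∑ a ∈ piF.filter (fun a =>
            (∀ i, ∑ j, a i j = C.get i) ∧ (∀ j, ∑ i, a i j = C'.get j)),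
            oneC k (matComp a) S := (Finset.sum_filter _ _).symm
      _ = ∑ a ∈ piF.filter (fun a =>
            (∀ i, ∑ j, a i j = C.get i) ∧ (∀ j, ∑ i, a i j = C'.get j)),
            ∑ u ∈ partF S (matComp a), Finsupp.single u (1 : k) :=
          Finset.sum_congr rfl fun a _ => oneC_eq_sum _ _
      _ = _ := Finset.sum_sigma' _ _ _
  rw [hL, hR]
  refine Finset.sum_bij (fun x hx =>
    (⟨aOf C.length C'.length x.1.1 x.2.1,
      ⟨refines x.1.1 x.2.1, refines_pairwise x.1.2.1 x.2.2.1,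
        fun y hy => mem_refines_ne hy⟩⟩ :
      (_ : Fin C.length → Fin C'.length → ℕ) × PackedSeq)) ?_ ?_ ?_ ?_
  · -- maps into the target index set
    intro x hx
    have hx1 := (Finset.mem_sigma.1 hx).1
    have hx2 := (Finset.mem_sigma.1 hx).2
    exact Finset.mem_sigma.2 ⟨hmemA x.1 x.2 hx1 hx2, hmemR x.1 x.2 hx1 hx2⟩
  · -- injectivity
    intro x1 hx1 x2 hx2 heq
    have hx1w := (Finset.mem_sigma.1 hx1).1
    have hx1v := (Finset.mem_sigma.1 hx1).2
    have hx2w := (Finset.mem_sigma.1 hx2).1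
    have hx2v := (Finset.mem_sigma.1 hx2).2
    obtain ⟨ha, hu'⟩ := Sigma.ext_iff.1 heq
    dsimp only at ha hu'
    have hu := eq_of_heq hu'
    have hRef : refines x1.1.1 x1.2.1 = refines x2.1.1 x2.2.1 := congrArg Subtype.val hu
    have hMat : matRows x1.1.1 x1.2.1 = matRows x2.1.1 x2.2.1 := by
      rw [← rowsOf_aOf (hlenW x1.1 hx1w) (hlenW x1.2 hx1v),
        ← rowsOf_aOf (hlenW x2.1 hx2w) (hlenW x2.2 hx2v), ha]
    have hw : x1.1.1 = x2.1.1 := by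
      rw [← recw x1.1 x1.2 hx1w hx1v, ← recw x2.1 x2.2 hx2w hx2v, hMat, hRef]
    have hv : x1.2.1 = x2.2.1 := by
      rw [← recv x1.1 x1.2 hx1w hx1v, ← recv x2.1 x2.2 hx2w hx2v, hMat, hRef]
    exact Sigma.ext_iff.2 ⟨Subtype.ext hw, heq_of_eq (Subtype.ext hv)⟩
  · -- surjectivity
    rintro ⟨a, u⟩ hb
    have hba := (Finset.mem_sigma.1 hb).1
    have hbu := (Finset.mem_sigma.1 hb).2
    have hconda := (Finset.mem_filter.1 hba).2
    obtain ⟨mb, ma, mc, md, me, mf, mh⟩ :=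
      monster (l := C'.length) (rowsOf a) u.1 (mem_rowsOf_length a) u.2.1
        (by rw [(mem_partF.1 hbu).2, matComp_eq])
    have hunion : unionOf u.1 = S := (mem_partF.1 hbu).1
    have hwlen : (chunks (rowsOf a) u.1).length = C.length := by
      rw [chunks_length, rowsOf_length]
    have hvlen : (cols (rowsOf a) u.1).length = C'.length := by
      rcases eq_or_ne (rowsOf a) [] with hR0 | hR0
      · have hC0 : C.length = 0 := by rw [← rowsOf_length a, hR0]; rfl
        have hCnil : C = [] := List.length_eq_zero_iff.1 hC0
        have hS0 : S.card = 0 := by rw [← hCsum, hCnil]; rfl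
        have hC'nil : C' = [] := by
          cases C' with
          | nil => rfl
          | cons j C'' =>
            have h1 := hC' j (by simp)
            have h2 : j + C''.sum = 0 := by rw [← List.sum_cons, hC'sum, hS0]
            omega
        rw [hR0, hC'nil]; rfl
      · exact mh hR0
    have haOf : aOf C.length C'.length (chunks (rowsOf a) u.1) (cols (rowsOf a) u.1) = a :=
      rowsOf_injective (by rw [rowsOf_aOf hwlen hvlen, mb])
    have hsub : ∀ Si ∈ chunks (rowsOf a) u.1, Si ⊆ unionOf (cols (rowsOf a) u.1) := by
      intro Si hSi; rw [mf, ← me]; exact subset_unionOf hSi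
    have hwmap : (chunks (rowsOf a) u.1).map Finset.card = C := by
      rw [← map_card_of_matRows md hsub, mb, rowsOf_map_sum]
      exact (congrArg List.ofFn (funext fun i => hconda.1 i)).trans (List.ofFn_get C)
    have hvmap : (cols (rowsOf a) u.1).map Finset.card = C' := by
      rw [← ofFn_getD ∅ Finset.card (cols (rowsOf a) u.1) C'.length hvlen]
      refine Eq.trans (congrArg List.ofFn (funext fun j => ?_)) (List.ofFn_get C')
      have hTmem : (cols (rowsOf a) u.1).getD (j : ℕ) ∅ ∈ cols (rowsOf a) u.1 :=
        getD_mem_of_lt (by rw [hvlen]; exact j.isLt)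
      have hTS : (cols (rowsOf a) u.1).getD (j : ℕ) ∅ ⊆ S := by
        rw [← hunion, ← mf]; exact subset_unionOf hTmem
      calc ((cols (rowsOf a) u.1).getD (j : ℕ) ∅).card
          = (unionOf (chunks (rowsOf a) u.1) ∩ ((cols (rowsOf a) u.1).getD (j : ℕ) ∅)).card := by
            rw [me, hunion, Finset.inter_eq_right.2 hTS]
        _ = ((chunks (rowsOf a) u.1).map fun Si =>
              (Si ∩ ((cols (rowsOf a) u.1).getD (j : ℕ) ∅)).card).sum :=
            (sum_map_inter_card' mc _).symm
        _ = ∑ i, aOf C.length C'.length (chunks (rowsOf a) u.1) (cols (rowsOf a) u.1) i j :=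
            sum_map_fin ∅ _ _ C.length hwlen
        _ = ∑ i, a i j := by rw [haOf]
        _ = C'.get j := hconda.2 j
    have hne_w : ∀ B ∈ chunks (rowsOf a) u.1, B ≠ ∅ := by
      intro B hB hB0
      have hmem : B.card ∈ C := by rw [← hwmap]; exact List.mem_map_of_mem hB
      have := hC _ hmem
      rw [hB0] at this
      simp at this
    have hne_v : ∀ B ∈ cols (rowsOf a) u.1, B ≠ ∅ := by
      intro B hB hB0
      have hmem : B.card ∈ C' := by rw [← hvmap]; exact List.mem_map_of_mem hB
      have := hC' _ hmem
      rw [hB0] at this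
      simp at this
    refine ⟨⟨⟨chunks (rowsOf a) u.1, mc, hne_w⟩, ⟨cols (rowsOf a) u.1, md, hne_v⟩⟩, ?_, ?_⟩
    · exact Finset.mem_sigma.2 ⟨mem_partF.2 ⟨me.trans hunion, hwmap⟩,
        mem_partF.2 ⟨mf.trans hunion, hvmap⟩⟩
    · exact Sigma.ext_iff.2 ⟨haOf, heq_of_eq (Subtype.ext ma)⟩
  · -- summands agree
    intro x hx
    exact compB_eq (mem_partF.1 (Finset.mem_sigma.1 hx).1).1
      (mem_partF.1 (Finset.mem_sigma.1 hx).2).1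


end Main

end TwistedDescent
end
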